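/- For 0 ≤ s ≤ t and u ∈ ℝ³ let b_t(s,u) = ∫₀^{t−s} (4πr)^{-3/2} e^{-‖u‖²/(4r)} dr. Then for any 0 ≤ s ≤ t₁ ≤ t₂, ∫_{ℝ³} b_{t₁}(s,u) b_{t₂}(s,u) du = ∫₀^{t₁−s} ∫₀^{t₂−s} (4π(r₁+r₂))^{-3/2} dr₁ dr₂ (both sides being finite). -/

import Mathlib

/-!
With `p_r(u) = (4πr)^{-d/2} e^{-‖u‖²/(4r)}` the heat kernel on a `d`-dimensional space,
`b_t(s, ·) = ∫₀^{t-s} p_r dr`. All integrands are nonnegative, so the computation is done in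
`[0, ∞]`: Tonelli turns the left side into `∫∫ (∫ p_{r₁} p_{r₂} du) dr₁ dr₂`, and the inner
Gaussian integral equals `p_{r₁+r₂}(0) = (4π(r₁+r₂))^{-d/2}`. For `d = 3` the result is finite
because `∫₀^T (r₁+r₂)^{-3/2} dr₂ ≤ 2 r₁^{-1/2}`, which is integrable at `r₁ = 0`.
-/

open Real MeasureTheory Set Module
open scoped Nat

/-- `b_t(s,u) = ∫₀^{t-s} (4πr)^{-3/2} e^{-‖u‖²/(4r)} dr` (equal to `0` when `s > t`). -/
noncomputable def bker (t s : ℝ) (u : EuclideanSpace ℝ (Fin 3)) : ℝ :=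
  ∫ r in Set.Ioc (0 : ℝ) (t - s), (4 * π * r) ^ (-(3 : ℝ) / 2) * Real.exp (-‖u‖ ^ 2 / (4 * r))

lemma exp_neg_div_le {c r : ℝ} (hc : 0 < c) (hr : 0 < r) (n : ℕ) :
    exp (-c / r) ≤ n ! * r ^ n / c ^ n := by
  have key := pow_div_factorial_le_exp _ (div_pos hc hr).le n
  rw [div_pow] at key
  rw [neg_div, exp_neg]
  calc (exp (c / r))⁻¹ ≤ (c ^ n / r ^ n / n !)⁻¹ := inv_anti₀ (by positivity) key
    _ = n ! * r ^ n / c ^ n := by field_simp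

lemma lintegral_mul_lintegral_swap {α β : Type*} [MeasurableSpace α] [MeasurableSpace β]
    {μ μ' : Measure α} {ν : Measure β} [SFinite μ] [SFinite μ'] [SFinite ν]
    {f : α → β → ENNReal} (hf : Measurable (Function.uncurry f)) :
    ∫⁻ b, (∫⁻ a, f a b ∂μ) * (∫⁻ a', f a' b ∂μ') ∂ν
      = ∫⁻ a, ∫⁻ a', ∫⁻ b, f a b * f a' b ∂ν ∂μ' ∂μ := by
  have hf' : ∀ b, Measurable fun a => f a b := fun b => hf.of_uncurry_right
  calc ∫⁻ b, (∫⁻ a, f a b ∂μ) * (∫⁻ a', f a' b ∂μ') ∂ν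
      = ∫⁻ b, ∫⁻ a, ∫⁻ a', f a b * f a' b ∂μ' ∂μ ∂ν := by
        simp_rw [lintegral_lintegral_mul (hf' _).aemeasurable (hf' _).aemeasurable]
    _ = ∫⁻ a, ∫⁻ b, ∫⁻ a', f a b * f a' b ∂μ' ∂ν ∂μ :=
        lintegral_lintegral_swap <| Measurable.aemeasurable <|
          Measurable.lintegral_prod_right'
            (f := fun p : (β × α) × α => f p.1.2 p.1.1 * f p.2 p.1.1) (by fun_prop)
    _ = ∫⁻ a, ∫⁻ a', ∫⁻ b, f a b * f a' b ∂ν ∂μ' ∂μ :=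
        lintegral_congr fun a => lintegral_lintegral_swap (by fun_prop)

lemma integrable_and_integral_eq_of_lintegral_ofReal_eq {α : Type*} [MeasurableSpace α]
    {μ : Measure α} {f : α → ℝ} (hf : 0 ≤ᵐ[μ] f) (hfm : AEStronglyMeasurable f μ) {c : ℝ}
    (hc : 0 ≤ c) (h : ∫⁻ a, ENNReal.ofReal (f a) ∂μ = ENNReal.ofReal c) :
    Integrable f μ ∧ ∫ a, f a ∂μ = c :=
  ⟨⟨hfm, (hasFiniteIntegral_iff_ofReal hf).2 (h ▸ ENNReal.ofReal_lt_top)⟩,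
    by rw [integral_eq_lintegral_of_nonneg_ae hf hfm, h, ENNReal.toReal_ofReal hc]⟩

section HeatKernel

variable {V : Type*} [NormedAddCommGroup V] [InnerProductSpace ℝ V]

noncomputable def heatKernel (r : ℝ) (u : V) : ℝ :=
  (4 * π * r) ^ (-(finrank ℝ V : ℝ) / 2) * exp (-‖u‖ ^ 2 / (4 * r))

lemma heatKernel_nonneg {r : ℝ} (hr : 0 ≤ r) (u : V) : 0 ≤ heatKernel r u :=
  mul_nonneg (rpow_nonneg (by positivity) _) (exp_pos _).le

lemma setIntegral_heatKernel_nonneg (T : ℝ) (u : V) : 0 ≤ ∫ r in Ioc 0 T, heatKernel r u :=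
  setIntegral_nonneg measurableSet_Ioc fun _ hr => heatKernel_nonneg hr.1.le u

/-- Away from the origin the Gaussian factor kills the singularity of `r ^ (-d/2)` at `r = 0`. -/
lemma heatKernel_le_mul_rpow {r : ℝ} (hr : 0 < r) {u : V} (hu : u ≠ 0) :
    heatKernel r u ≤ (4 * π) ^ (-(finrank ℝ V : ℝ) / 2) * (finrank ℝ V) ! * 4 ^ finrank ℝ V /
        (‖u‖ ^ 2) ^ finrank ℝ V * r ^ ((finrank ℝ V : ℝ) / 2) := by
  set d := finrank ℝ V
  have hpow : r ^ (-(d : ℝ) / 2) * r ^ d = r ^ ((d : ℝ) / 2) := by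
    rw [← rpow_natCast r d, ← rpow_add hr]
    ring_nf
  calc heatKernel r u
      ≤ (4 * π * r) ^ (-(d : ℝ) / 2) * (d ! * (4 * r) ^ d / (‖u‖ ^ 2) ^ d) :=
        mul_le_mul_of_nonneg_left (exp_neg_div_le (by positivity) (by positivity) d)
          (rpow_nonneg (by positivity) _)
    _ = _ := by
        rw [mul_rpow (by positivity) hr.le, mul_pow, ← hpow]
        ring

lemma heatKernel_mul_heatKernel {r₁ r₂ : ℝ} (h₁ : 0 < r₁) (h₂ : 0 < r₂) (u : V) :
    heatKernel r₁ u * heatKernel r₂ u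
      = (4 * π * r₁) ^ (-(finrank ℝ V : ℝ) / 2) * (4 * π * r₂) ^ (-(finrank ℝ V : ℝ) / 2) *
          exp (-((r₁ + r₂) / (4 * r₁ * r₂)) * ‖u‖ ^ 2) := by
  rw [heatKernel, heatKernel, mul_mul_mul_comm, ← exp_add]
  congr 2
  field_simp
  ring

variable [MeasurableSpace V]

lemma measurable_heatKernel [OpensMeasurableSpace V] :
    Measurable (Function.uncurry (heatKernel (V := V))) := by
  unfold heatKernel Function.uncurry
  fun_prop

lemma stronglyMeasurable_setIntegral_heatKernel [OpensMeasurableSpace V] (S : Set ℝ) :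
    StronglyMeasurable fun u : V => ∫ r in S, heatKernel r u :=
  (measurable_heatKernel.comp measurable_swap).stronglyMeasurable.integral_prod_right
    (f := fun (u : V) r => heatKernel r u)

lemma integrableOn_heatKernel_Ioc [OpensMeasurableSpace V] (T : ℝ) {u : V} (hu : u ≠ 0) :
    IntegrableOn (fun r => heatKernel r u) (Ioc 0 T) := by
  obtain ⟨C, hC⟩ : ∃ C, ∀ r, 0 < r → heatKernel r u ≤ C * r ^ ((finrank ℝ V : ℝ) / 2) :=
    ⟨_, fun r hr => heatKernel_le_mul_rpow hr hu⟩
  have hd : (-1 : ℝ) < (finrank ℝ V : ℝ) / 2 := by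
    linarith [(by positivity : (0 : ℝ) ≤ (finrank ℝ V : ℝ) / 2)]
  refine ((intervalIntegral.intervalIntegrable_rpow' (a := 0) (b := T) hd).1.const_mul C).mono'
    measurable_heatKernel.of_uncurry_right.aestronglyMeasurable ?_
  filter_upwards [ae_restrict_mem measurableSet_Ioc] with r hr
  rw [norm_of_nonneg (heatKernel_nonneg hr.1.le u)]
  exact hC r hr.1

lemma ofReal_setIntegral_heatKernel [OpensMeasurableSpace V] (T : ℝ) {u : V} (hu : u ≠ 0) :
    ENNReal.ofReal (∫ r in Ioc 0 T, heatKernel r u)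
      = ∫⁻ r in Ioc 0 T, ENNReal.ofReal (heatKernel r u) :=
  ofReal_integral_eq_lintegral_ofReal (integrableOn_heatKernel_Ioc T hu)
    ((ae_restrict_iff' measurableSet_Ioc).2 (.of_forall fun _ hr => heatKernel_nonneg hr.1.le u))

variable [FiniteDimensional ℝ V] [BorelSpace V]

/-- The Chapman–Kolmogorov identity `p_{r₁} * p_{r₂} = p_{r₁ + r₂}` evaluated at the origin. -/
lemma integral_heatKernel_mul_heatKernel {r₁ r₂ : ℝ} (h₁ : 0 < r₁) (h₂ : 0 < r₂) :
    ∫ u : V, heatKernel r₁ u * heatKernel r₂ u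
      = (4 * π * (r₁ + r₂)) ^ (-(finrank ℝ V : ℝ) / 2) := by
  have hb : 0 < (r₁ + r₂) / (4 * r₁ * r₂) := by positivity
  simp_rw [heatKernel_mul_heatKernel h₁ h₂, integral_const_mul,
    GaussianFourier.integral_rexp_neg_mul_sq_norm hb]
  rw [neg_div, rpow_neg (by positivity), rpow_neg (by positivity), rpow_neg (by positivity),
    ← inv_rpow (by positivity), ← inv_rpow (by positivity), ← inv_rpow (by positivity),
    ← mul_rpow (by positivity) (by positivity), ← mul_rpow (by positivity) (by positivity)]
  congr 1
  field_simp

lemma integrable_heatKernel_mul_heatKernel {r₁ r₂ : ℝ} (h₁ : 0 < r₁) (h₂ : 0 < r₂) :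
    Integrable (fun u : V => heatKernel r₁ u * heatKernel r₂ u) :=
  .of_integral_ne_zero <| by
    rw [integral_heatKernel_mul_heatKernel h₁ h₂]
    positivity

lemma lintegral_heatKernel_mul_heatKernel {r₁ r₂ : ℝ} (h₁ : 0 < r₁) (h₂ : 0 < r₂) :
    ∫⁻ u : V, ENNReal.ofReal (heatKernel r₁ u) * ENNReal.ofReal (heatKernel r₂ u)
      = ENNReal.ofReal ((4 * π * (r₁ + r₂)) ^ (-(finrank ℝ V : ℝ) / 2)) := by
  simp_rw [← ENNReal.ofReal_mul (heatKernel_nonneg h₁.le _)]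
  rw [← integral_heatKernel_mul_heatKernel h₁ h₂, ofReal_integral_eq_lintegral_ofReal
    (integrable_heatKernel_mul_heatKernel h₁ h₂)
    (.of_forall fun u => mul_nonneg (heatKernel_nonneg h₁.le u) (heatKernel_nonneg h₂.le u))]

/-- Tonelli, once the origin (where `r ↦ p_r(u)` need not be integrable) is discarded. -/
lemma lintegral_ofReal_setIntegral_heatKernel_mul [Nontrivial V] (T₁ T₂ : ℝ) :
    ∫⁻ u : V, ENNReal.ofReal
        ((∫ r in Ioc 0 T₁, heatKernel r u) * ∫ r in Ioc 0 T₂, heatKernel r u)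
      = ∫⁻ r₁ in Ioc 0 T₁, ∫⁻ r₂ in Ioc 0 T₂,
          ENNReal.ofReal ((4 * π * (r₁ + r₂)) ^ (-(finrank ℝ V : ℝ) / 2)) := by
  have hne : ∀ᵐ u : V, u ≠ 0 := by simp [ae_iff, measure_singleton]
  calc _ = ∫⁻ u : V, (∫⁻ r₁ in Ioc 0 T₁, ENNReal.ofReal (heatKernel r₁ u)) *
          ∫⁻ r₂ in Ioc 0 T₂, ENNReal.ofReal (heatKernel r₂ u) := by
        refine lintegral_congr_ae (hne.mono fun u hu => ?_)
        dsimp only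
        rw [ENNReal.ofReal_mul (setIntegral_heatKernel_nonneg T₁ u),
          ofReal_setIntegral_heatKernel T₁ hu, ofReal_setIntegral_heatKernel T₂ hu]
    _ = ∫⁻ r₁ in Ioc 0 T₁, ∫⁻ r₂ in Ioc 0 T₂, ∫⁻ u : V,
          ENNReal.ofReal (heatKernel r₁ u) * ENNReal.ofReal (heatKernel r₂ u) :=
        lintegral_mul_lintegral_swap (ENNReal.measurable_ofReal.comp measurable_heatKernel)
    _ = _ :=
        setLIntegral_congr_fun measurableSet_Ioc fun _ hr₁ =>
          setLIntegral_congr_fun measurableSet_Ioc fun _ hr₂ =>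
            lintegral_heatKernel_mul_heatKernel hr₁.1 hr₂.1

end HeatKernel

section RpowAdd

variable {a c : ℝ}

lemma integrableOn_rpow_mul_add_Ioc (hc : 0 < c) {r₁ : ℝ} (hr₁ : 0 < r₁) (T : ℝ) :
    IntegrableOn (fun r₂ => (c * (r₁ + r₂)) ^ a) (Ioc 0 T) := by
  have hcont : ContinuousOn (fun r₂ => (c * (r₁ + r₂)) ^ a) (Icc 0 T) :=
    ContinuousOn.rpow_const (by fun_prop) fun r₂ hr₂ => Or.inl (by have := hr₂.1; positivity)
  exact (hcont.integrableOn_compact isCompact_Icc).mono_set Ioc_subset_Icc_self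

lemma setIntegral_rpow_mul_add_nonneg (hc : 0 ≤ c) {r₁ : ℝ} (hr₁ : 0 ≤ r₁) (T : ℝ) :
    0 ≤ ∫ r₂ in Ioc 0 T, (c * (r₁ + r₂)) ^ a :=
  setIntegral_nonneg measurableSet_Ioc fun r₂ hr₂ => rpow_nonneg (by have := hr₂.1; positivity) _

lemma setIntegral_rpow_mul_add_le (ha : a < -1) (hc : 0 < c) {r₁ : ℝ} (hr₁ : 0 < r₁) (T : ℝ) :
    ∫ r₂ in Ioc 0 T, (c * (r₁ + r₂)) ^ a ≤ c ^ a * (-r₁ ^ (a + 1) / (a + 1)) := by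
  have hbound : 0 ≤ -r₁ ^ (a + 1) / (a + 1) :=
    div_nonneg_of_nonpos (neg_nonpos.2 (rpow_nonneg hr₁.le _)) (by linarith)
  rcases le_total T 0 with hT | hT
  · rw [Ioc_eq_empty (not_lt.2 hT), setIntegral_empty]
    exact mul_nonneg (by positivity) hbound
  have h0 : (0 : ℝ) ∉ uIcc r₁ (T + r₁) := by
    rw [uIcc_of_le (by linarith), mem_Icc]
    intro h
    linarith [h.1]
  calc ∫ r₂ in Ioc 0 T, (c * (r₁ + r₂)) ^ a
      = ∫ r₂ in Ioc 0 T, c ^ a * (r₂ + r₁) ^ a :=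
        setIntegral_congr_fun measurableSet_Ioc fun r₂ hr₂ => by
          rw [mul_rpow hc.le (by linarith [hr₂.1]), add_comm r₁]
    _ = c ^ a * ∫ r₂ in r₁..T + r₁, r₂ ^ a := by
        rw [integral_const_mul, ← intervalIntegral.integral_of_le hT,
          intervalIntegral.integral_comp_add_right (· ^ a), zero_add]
    _ = c ^ a * (((T + r₁) ^ (a + 1) - r₁ ^ (a + 1)) / (a + 1)) := by
        rw [integral_rpow (Or.inr ⟨ha.ne, h0⟩)]
    _ ≤ c ^ a * (-r₁ ^ (a + 1) / (a + 1)) := by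
        have := rpow_nonneg (by linarith : (0 : ℝ) ≤ T + r₁) (a + 1)
        gcongr c ^ a * ?_
        exact div_le_div_of_nonpos_of_le (by linarith) (by linarith)

/-- For `-2 < a < -1` the inner integral behaves like `r₁ ^ (a + 1)`, integrable at `0`. -/
lemma integrableOn_setIntegral_rpow_mul_add (ha₁ : -2 < a) (ha₂ : a < -1) (hc : 0 < c)
    (T₁ T₂ : ℝ) :
    IntegrableOn (fun r₁ => ∫ r₂ in Ioc 0 T₂, (c * (r₁ + r₂)) ^ a) (Ioc 0 T₁) := by
  have hm : Measurable fun p : ℝ × ℝ => (c * (p.1 + p.2)) ^ a := by fun_prop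
  refine ((intervalIntegral.intervalIntegrable_rpow' (a := 0) (b := T₁)
    (by linarith : -1 < a + 1)).1.neg.div_const (a + 1) |>.const_mul (c ^ a)).mono'
    (hm.stronglyMeasurable.integral_prod_right
      (f := fun r₁ r₂ => (c * (r₁ + r₂)) ^ a)).aestronglyMeasurable ?_
  filter_upwards [ae_restrict_mem measurableSet_Ioc] with r₁ hr₁
  rw [norm_of_nonneg (setIntegral_rpow_mul_add_nonneg hc.le hr₁.1.le T₂)]
  exact setIntegral_rpow_mul_add_le ha₂ hc hr₁.1 T₂

lemma lintegral_lintegral_ofReal_rpow_mul_add (ha₁ : -2 < a) (ha₂ : a < -1) (hc : 0 < c)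
    (T₁ T₂ : ℝ) :
    ∫⁻ r₁ in Ioc 0 T₁, ∫⁻ r₂ in Ioc 0 T₂, ENNReal.ofReal ((c * (r₁ + r₂)) ^ a)
      = ENNReal.ofReal (∫ r₁ in Ioc 0 T₁, ∫ r₂ in Ioc 0 T₂, (c * (r₁ + r₂)) ^ a) := by
  rw [ofReal_integral_eq_lintegral_ofReal (integrableOn_setIntegral_rpow_mul_add ha₁ ha₂ hc T₁ T₂)
    ((ae_restrict_iff' measurableSet_Ioc).2
      (.of_forall fun _ hr₁ => setIntegral_rpow_mul_add_nonneg hc.le hr₁.1.le T₂))]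
  refine setLIntegral_congr_fun measurableSet_Ioc fun r₁ hr₁ => ?_
  exact (ofReal_integral_eq_lintegral_ofReal (integrableOn_rpow_mul_add_Ioc hc hr₁.1 T₂)
    ((ae_restrict_iff' measurableSet_Ioc).2
      (.of_forall fun r₂ hr₂ => rpow_nonneg (by have := hr₁.1; have := hr₂.1; positivity) _))).symm

end RpowAdd

lemma bker_eq_setIntegral_heatKernel (t s : ℝ) :
    bker t s = fun u => ∫ r in Ioc 0 (t - s), heatKernel r u := by
  ext u
  simp [bker, heatKernel]

theorem bker_product_integral_general (s t₁ t₂ : ℝ) :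
    Integrable (fun u : EuclideanSpace ℝ (Fin 3) => bker t₁ s u * bker t₂ s u) ∧
    IntegrableOn
      (fun r₁ : ℝ => ∫ r₂ in Set.Ioc (0 : ℝ) (t₂ - s), (4 * π * (r₁ + r₂)) ^ (-(3 : ℝ) / 2))
      (Set.Ioc (0 : ℝ) (t₁ - s)) ∧
    (∫ u : EuclideanSpace ℝ (Fin 3), bker t₁ s u * bker t₂ s u)
      = ∫ r₁ in Set.Ioc (0 : ℝ) (t₁ - s), ∫ r₂ in Set.Ioc (0 : ℝ) (t₂ - s),
          (4 * π * (r₁ + r₂)) ^ (-(3 : ℝ) / 2) := by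
  have ha₁ : -2 < -(3 : ℝ) / 2 := by norm_num
  have ha₂ : -(3 : ℝ) / 2 < -1 := by norm_num
  have hc : 0 < 4 * π := by positivity
  have hlint := lintegral_ofReal_setIntegral_heatKernel_mul
    (V := EuclideanSpace ℝ (Fin 3)) (t₁ - s) (t₂ - s)
  rw [finrank_euclideanSpace_fin, Nat.cast_ofNat,
    lintegral_lintegral_ofReal_rpow_mul_add ha₁ ha₂ hc] at hlint
  rw [bker_eq_setIntegral_heatKernel, bker_eq_setIntegral_heatKernel]
  obtain ⟨hint, heq⟩ := integrable_and_integral_eq_of_lintegral_ofReal_eq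
    (.of_forall fun u => mul_nonneg (setIntegral_heatKernel_nonneg _ u)
      (setIntegral_heatKernel_nonneg _ u))
    ((stronglyMeasurable_setIntegral_heatKernel _).mul
      (stronglyMeasurable_setIntegral_heatKernel _)).aestronglyMeasurable
    (setIntegral_nonneg measurableSet_Ioc fun _ hr₁ =>
      setIntegral_rpow_mul_add_nonneg hc.le hr₁.1.le _) hlint
  exact ⟨hint, integrableOn_setIntegral_rpow_mul_add ha₁ ha₂ hc _ _, heq⟩

/-- For `0 ≤ s ≤ t₁ ≤ t₂`,
`∫_{ℝ³} b_{t₁}(s,u) b_{t₂}(s,u) du = ∫₀^{t₁-s} ∫₀^{t₂-s} (4π(r₁+r₂))^{-3/2} dr₁ dr₂`,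
both sides being finite. -/
theorem bker_product_integral (s t₁ t₂ : ℝ) (hs : 0 ≤ s) (h₁ : s ≤ t₁) (h₂ : t₁ ≤ t₂) :
    Integrable (fun u : EuclideanSpace ℝ (Fin 3) => bker t₁ s u * bker t₂ s u) ∧
    IntegrableOn
      (fun r₁ : ℝ => ∫ r₂ in Set.Ioc (0 : ℝ) (t₂ - s), (4 * π * (r₁ + r₂)) ^ (-(3 : ℝ) / 2))
      (Set.Ioc (0 : ℝ) (t₁ - s)) ∧
    (∫ u : EuclideanSpace ℝ (Fin 3), bker t₁ s u * bker t₂ s u)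
      = ∫ r₁ in Set.Ioc (0 : ℝ) (t₁ - s), ∫ r₂ in Set.Ioc (0 : ℝ) (t₂ - s),
          (4 * π * (r₁ + r₂)) ^ (-(3 : ℝ) / 2) :=
  bker_product_integral_general s t₁ t₂
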